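/- Let I be a PPN-3-SAT instance with clauses C₁,…,C_m (2-clauses being C₁,…,C_{m₂} and 3-clauses C_{m₂+1},…,C_m), and construct the HRRCDR instance I' with the following gadgets (all hospital capacities are 1; notation: for variable x_i, its k-th positive occurrence (k=1,2) is the ℓ_{i,k}-th literal of clause C_{j_{i,k}} and its negative occurrence is the ℓ_{i,3}-th literal of C_{j_{i,3}}; for clause C_j whose ℓ-th literal is of variable x_{i_{j,ℓ}}, k_{j,ℓ} ∈ {1,2,3} indicates which of those three occurrences it is). Variable gadget for x_i: residents e'_{i,1}: (b'_{i,1}, b'_{i,3}) and e'_{i,2}: (b'_{i,2}, b'_{i,4}); hospitals b'_{i,1}: (e'_{i,1}), x'_{i,1}: (c'_{j_{i,1},ℓ_{i,1}}), b'_{i,2}: (e'_{i,2}), x'_{i,2}: (c'_{j_{i,2},ℓ_{i,2}}), b'_{i,3}: (e'_{i,1}), b'_{i,4}: (e'_{i,2}), x'_{i,3}: (c'_{j_{i,3},ℓ_{i,3}}); regions {b'_{i,1}, x'_{i,1}} with cap 1, {b'_{i,2}, x'_{i,2}} with cap 1, and {b'_{i,3}, b'_{i,4}, x'_{i,3}}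 with cap 2. Clause gadget for a 2-clause C_j: residents c'_{j,1}: (x'_{i_{j,1},k_{j,1}}, a'_{j,1}) and c'_{j,2}: (x'_{i_{j,2},k_{j,2}}, a'_{j,1}); hospitals a'_{j,1}: (c'_{j,1}, c'_{j,2}) and y'_j: (z'_j); region {a'_{j,1}, y'_j} with cap 1. Clause gadget for a 3-clause C_j: residents c'_{j,1}: (x'_{i_{j,1},k_{j,1}}, a'_{j,1}), c'_{j,2}: (x'_{i_{j,2},k_{j,2}}, a'_{j,1}), d'_j: (a'_{j,2}, a'_{j,3}), c'_{j,3}: (x'_{i_{j,3},k_{j,3}}, a'_{j,3}); hospitals a'_{j,1}: (c'_{j,1}, c'_{j,2}), a'_{j,2}: (d'_j), a'_{j,3}: (d'_j, c'_{j,3}), y'_j: (z'_j); regions {a'_{j,1}, a'_{j,2}} with cap 1 and {a'_{j,3}, y'_j} with cap 1. Terminal gadget for each clause C_j: residents g'_{j,1}: (g'_{j,2}, g'_{j,4}), g'_{j,3}: (g'_{j,4}, g'_{j,2}), z'_j: (y'_j, t'_j); hospitals g'_{j,2}: (g'_{j,3}, g'_{j,1}), g'_{j,4}: (g'_{j,1},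 g'_{j,3}), t'_j: (z'_j); region {g'_{j,2}, g'_{j,4}, t'_j} with cap 1. Then I' admits a strongly stable matching if and only if I is satisfiable. (Note that in I' every resident's list has length ≤ 2, every hospital's list has length ≤ 2, every region has size ≤ 3, and regions are pairwise disjoint.) -/

import Mathlib

/-- `a` is strictly preferred to `b` in the strictly ordered preference list `l`
(most preferred first). -/
def ListPref {α : Type*} [DecidableEq α] (l : List α) (a b : α) : Prop :=
  b ∈ l ∧ l.idxOf a < l.idxOf b

/-- An instance of the Hospitals/Residents problem with Regional Caps (HRRC):
residents `R`, hospitals `H`, strict preference lists on both sides,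
hospital capacities `q`, a family `regions` of regions with regional caps `cap`. -/
structure HRRC (R H : Type*) where
  prefR : R → List H
  prefH : H → List R
  q : H → ℕ
  regions : Set (Finset H)
  cap : Finset H → ℕ

namespace HRRC

variable {R H : Type*} [DecidableEq R] [DecidableEq H]

/-- Well-formedness: preference lists are strict (no repetitions), acceptability is
mutual, and regions are nonempty. -/
def WellFormed (I : HRRC R H) : Prop :=
  (∀ r, (I.prefR r).Nodup) ∧ (∀ h, (I.prefH h).Nodup) ∧
  (∀ r h, h ∈ I.prefR r ↔ r ∈ I.prefH h) ∧
  (∀ E ∈ I.regions, E.Nonempty)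

/-- `M(h)`: the set of residents assigned to hospital `h`. -/
def assignedTo (M : Finset (R × H)) (h : H) : Finset R :=
  (M.filter fun p => p.2 = h).image Prod.fst

/-- `M(E)`: the set of residents assigned to some hospital in the region `E`. -/
def assignedIn (M : Finset (R × H)) (E : Finset H) : Finset R :=
  (M.filter fun p => p.2 ∈ E).image Prod.fst

/-- `M` is a matching: pairs are mutually acceptable, each resident has at most one
hospital, and no hospital exceeds its capacity. -/
def IsMatching (I : HRRC R H) (M : Finset (R × H)) : Prop :=
  (∀ p ∈ M, p.2 ∈ I.prefR p.1 ∧ p.1 ∈ I.prefH p.2) ∧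
  (∀ r h h', (r, h) ∈ M → (r, h') ∈ M → h = h') ∧
  (∀ h, (assignedTo M h).card ≤ I.q h)

/-- Feasibility: all regional caps are respected. -/
def FeasibleCaps (I : HRRC R H) (M : Finset (R × H)) : Prop :=
  ∀ E ∈ I.regions, (assignedIn M E).card ≤ I.cap E

/-- `M \ {(r, M(r))} ∪ {(r, h)}`. -/
def move (M : Finset (R × H)) (r : R) (h : H) : Finset (R × H) :=
  (M.filter fun p => p.1 ≠ r) ∪ {(r, h)}

/-- `(r, h)` is a blocking pair for `M`. -/
def IsBlockingPair (I : HRRC R H) (M : Finset (R × H)) (r : R) (h : H) : Prop :=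
  (r, h) ∉ M ∧ (h ∈ I.prefR r ∧ r ∈ I.prefH h) ∧
  ((∀ h', (r, h') ∉ M) ∨ ∃ h', (r, h') ∈ M ∧ ListPref (I.prefR r) h h') ∧
  ((assignedTo M h).card < I.q h ∨ ∃ r' ∈ assignedTo M h, ListPref (I.prefH h) r r')

/-- `(r, h)` is a strong blocking pair for `M`. -/
def IsSBP (I : HRRC R H) (M : Finset (R × H)) (r : R) (h : H) : Prop :=
  I.IsBlockingPair M r h ∧
  (I.FeasibleCaps (move M r h) ∨ ∃ r' ∈ assignedTo M h, ListPref (I.prefH h) r r')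

/-- `M` is a strongly stable matching of `I`. -/
def IsStronglyStable (I : HRRC R H) (M : Finset (R × H)) : Prop :=
  I.IsMatching M ∧ I.FeasibleCaps M ∧ ∀ r h, ¬ I.IsSBP M r h

end HRRC

/- A PPN-3-SAT instance with `n` variables and `m` clauses is encoded as follows:
clauses `j` with `(j : ℕ) < m₂` are 2-clauses, the others are 3-clauses (so clause
`j` has length `if (j : ℕ) < m₂ then 2 else 3`, and its valid literal positions are
the `l : Fin 3` below that length); `v j l` is the variable of the `l`-th literal of
clause `j` and `pol j l` its polarity; `occ i k = (j_{i,k}, ℓ_{i,k})` is the position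
of the `k`-th occurrence of variable `i` (`k = 0, 1` its two positive occurrences,
`k = 2` its negative occurrence); `kIdx j l = k_{j,l}` tells which occurrence of its
variable the `l`-th literal of clause `j` is. -/

/-- Residents of `I'`: `e'_{i,1}, e'_{i,2}` (here `e i 0, e i 1`);
`c'_{j,1}, c'_{j,2}, c'_{j,3}` (here `c j 0, c j 1, c j 2`; `c j 2` is unused for a
2-clause `j` and gets an empty list); `d'_j` (unused for 2-clauses);
`g'_{j,1}, g'_{j,3}, z'_j`. -/
inductive Res11 (n m : ℕ) where
  | e (i : Fin n) (t : Fin 2)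
  | c (j : Fin m) (l : Fin 3)
  | d (j : Fin m)
  | g1 (j : Fin m)
  | g3 (j : Fin m)
  | z (j : Fin m)
deriving DecidableEq

/-- Hospitals of `I'`: `b'_{i,1}, …, b'_{i,4}` (here `b i 0, …, b i 3`);
`x'_{i,1}, x'_{i,2}, x'_{i,3}` (here `x i 0, x i 1, x i 2`);
`a'_{j,1}, a'_{j,2}, a'_{j,3}` (here `a j 0, a j 1, a j 2`; the latter two are unused
for 2-clauses); `y'_j`; `g'_{j,2}, g'_{j,4}, t'_j`. -/
inductive Hos11 (n m : ℕ) where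
  | b (i : Fin n) (t : Fin 4)
  | x (i : Fin n) (k : Fin 3)
  | a (j : Fin m) (t : Fin 3)
  | y (j : Fin m)
  | g2 (j : Fin m)
  | g4 (j : Fin m)
  | t (j : Fin m)
deriving DecidableEq

/-- Resident preference lists of `I'` (per Figures in the proof of Theorem `(2,2,3)`):
`e'_{i,1}: (b'_{i,1}, b'_{i,3})`, `e'_{i,2}: (b'_{i,2}, b'_{i,4})`,
`c'_{j,1}: (x'_{i_{j,1},k_{j,1}}, a'_{j,1})`, `c'_{j,2}: (x'_{i_{j,2},k_{j,2}}, a'_{j,1})`,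
`c'_{j,3}: (x'_{i_{j,3},k_{j,3}}, a'_{j,3})` (3-clauses only),
`d'_j: (a'_{j,2}, a'_{j,3})` (3-clauses only),
`g'_{j,1}: (g'_{j,2}, g'_{j,4})`, `g'_{j,3}: (g'_{j,4}, g'_{j,2})`, `z'_j: (y'_j, t'_j)`. -/
def prefRes11 {n m : ℕ} (m₂ : ℕ) (v : Fin m → Fin 3 → Fin n)
    (kIdx : Fin m → Fin 3 → Fin 3) : Res11 n m → List (Hos11 n m)
  | .e i t => if (t : ℕ) = 0 then [.b i 0, .b i 2] else [.b i 1, .b i 3]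
  | .c j l =>
      if (l : ℕ) < 2 then [.x (v j l) (kIdx j l), .a j 0]
      else if (j : ℕ) < m₂ then []
      else [.x (v j l) (kIdx j l), .a j 2]
  | .d j => if (j : ℕ) < m₂ then [] else [.a j 1, .a j 2]
  | .g1 j => [.g2 j, .g4 j]
  | .g3 j => [.g4 j, .g2 j]
  | .z j => [.y j, .t j]

/-- Hospital preference lists of `I'`:
`b'_{i,1}: (e'_{i,1})`, `b'_{i,2}: (e'_{i,2})`, `b'_{i,3}: (e'_{i,1})`,
`b'_{i,4}: (e'_{i,2})`, `x'_{i,k}: (c'_{j_{i,k},ℓ_{i,k}})`,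
`a'_{j,1}: (c'_{j,1}, c'_{j,2})`, `a'_{j,2}: (d'_j)` and `a'_{j,3}: (d'_j, c'_{j,3})`
(3-clauses only), `y'_j: (z'_j)`, `g'_{j,2}: (g'_{j,3}, g'_{j,1})`,
`g'_{j,4}: (g'_{j,1}, g'_{j,3})`, `t'_j: (z'_j)`. -/
def prefHos11 {n m : ℕ} (m₂ : ℕ) (occ : Fin n → Fin 3 → Fin m × Fin 3) :
    Hos11 n m → List (Res11 n m)
  | .b i t => if (t : ℕ) % 2 = 0 then [.e i 0] else [.e i 1]
  | .x i k => [.c (occ i k).1 (occ i k).2]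
  | .a j t =>
      if (t : ℕ) = 0 then [.c j 0, .c j 1]
      else if (j : ℕ) < m₂ then []
      else if (t : ℕ) = 1 then [.d j]
      else [.d j, .c j 2]
  | .y j => [.z j]
  | .g2 j => [.g3 j, .g1 j]
  | .g4 j => [.g1 j, .g3 j]
  | .t j => [.z j]

/-- Regions of `I'`: for each variable `i`, `{b'_{i,1}, x'_{i,1}}`,
`{b'_{i,2}, x'_{i,2}}` and `{b'_{i,3}, b'_{i,4}, x'_{i,3}}`; for each 2-clause `j`,
`{a'_{j,1}, y'_j}`; for each 3-clause `j`, `{a'_{j,1}, a'_{j,2}}` and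
`{a'_{j,3}, y'_j}`; for each clause `j`, `{g'_{j,2}, g'_{j,4}, t'_j}`. -/
def regions11 {n m : ℕ} (m₂ : ℕ) : Set (Finset (Hos11 n m)) :=
  { E | (∃ i : Fin n,
      E = {Hos11.b i 0, Hos11.x i 0} ∨
      E = {Hos11.b i 1, Hos11.x i 1} ∨
      E = {Hos11.b i 2, Hos11.b i 3, Hos11.x i 2}) ∨
    (∃ j : Fin m,
      ((j : ℕ) < m₂ ∧ E = {Hos11.a j 0, Hos11.y j}) ∨
      (¬ (j : ℕ) < m₂ ∧
        (E = {Hos11.a j 0, Hos11.a j 1} ∨ E = {Hos11.a j 2, Hos11.y j})) ∨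
      E = {Hos11.g2 j, Hos11.g4 j, Hos11.t j}) }

open Classical in
/-- Regional caps of `I'`: the region `{b'_{i,3}, b'_{i,4}, x'_{i,3}}` has cap 2,
all other regions have cap 1. -/
noncomputable def cap11 {n m : ℕ} : Finset (Hos11 n m) → ℕ := fun E =>
  if ∃ i : Fin n, E = {Hos11.b i 2, Hos11.b i 3, Hos11.x i 2} then 2 else 1

/-- The HRRCDR instance `I'` built from a PPN-3-SAT instance (all hospital
capacities are 1). -/
noncomputable def ppnInstance223 {n m : ℕ} (m₂ : ℕ) (v : Fin m → Fin 3 → Fin n)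
    (occ : Fin n → Fin 3 → Fin m × Fin 3) (kIdx : Fin m → Fin 3 → Fin 3) :
    HRRC (Res11 n m) (Hos11 n m) where
  prefR := prefRes11 m₂ v kIdx
  prefH := prefHos11 m₂ occ
  q := fun _ => 1
  regions := regions11 m₂
  cap := cap11


/-!
A strongly stable matching of `I'` yields a satisfying assignment. In the terminal gadget of a
clause `C_j`, the residents `g'_{j,1}, g'_{j,3}` and hospitals `g'_{j,2}, g'_{j,4}` form a
preference cycle inside a cap-1 region, which is only stable if `z'_j` fills that region at
`t'_j`. Then `z'_j` prefers the empty `y'_j`, so the region of `y'_j` is full: some `c'_{j,ℓ}`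
holds its clause hospital (for a 3-clause this may be `d'_j` at `a'_{j,3}`, and the same argument
applied to `d'_j` and `a'_{j,2}` then puts some `c'_{j,ℓ}` at `a'_{j,1}`). In turn `c'_{j,ℓ}`
prefers the empty `x'_{i,k}` of its occurrence, so the region of `x'_{i,k}` is full: `e'_{i,k}`
holds `b'_{i,k}` for a positive occurrence, and `e'_{i,1}, e'_{i,2}` hold `b'_{i,3}, b'_{i,4}`
for the negative one. Reading `x_i` as true iff some `e'_{i,t}` holds its first choice makes
that literal true.

Conversely, from a satisfying assignment send `e'_{i,t}` to its first or second choice according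
to `x_i`, the resident of each false literal to its `x'`, the resident of the first true literal
of each clause to its clause hospital (and `d'_j` to the other `a'` of a 3-clause), and `z'_j`
to `t'_j`. Every pair that could still block involves a resident or a hospital holding its first
choice, or an empty hospital whose region is already full.
-/

theorem listPref_pair {α : Type*} [DecidableEq α] {a b : α} (h : a ≠ b) :
    ListPref [a, b] a b := by
  simp [ListPref, h, h.symm]

theorem not_listPref_head {α : Type*} [DecidableEq α] (a b : α) (l : List α) :
    ¬ ListPref (a :: l) b a := by
  simp [ListPref]

theorem ListPref.mem_left {α : Type*} [DecidableEq α] {l : List α} {a b : α}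
    (h : ListPref l a b) : a ∈ l :=
  List.idxOf_lt_length_iff.mp (h.2.trans (List.idxOf_lt_length_iff.mpr h.1))

theorem ListPref.ne {α : Type*} [DecidableEq α] {l : List α} {a b : α}
    (h : ListPref l a b) : a ≠ b := by
  rintro rfl
  exact lt_irrefl _ h.2

/-! ### Strong stability in HRRC -/

namespace HRRC

variable {R H : Type*} [DecidableEq R] [DecidableEq H]
  {I : HRRC R H} {M : Finset (R × H)} {r : R} {h h' : H} {E : Finset H}

@[simp] theorem mem_assignedTo : r ∈ assignedTo M h ↔ (r, h) ∈ M := by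
  simp [assignedTo]

@[simp] theorem mem_assignedIn : r ∈ assignedIn M E ↔ ∃ h ∈ E, (r, h) ∈ M := by
  simp [assignedIn, and_comm]

theorem assignedTo_eq_empty : assignedTo M h = ∅ ↔ ∀ r, (r, h) ∉ M := by
  simp [Finset.eq_empty_iff_forall_notMem]

theorem card_assignedTo_le_length (hacc : ∀ p ∈ M, p.1 ∈ I.prefH p.2) (h : H) :
    (assignedTo M h).card ≤ (I.prefH h).length :=
  (Finset.card_le_card fun _ hr => List.mem_toFinset.mpr (hacc _ (mem_assignedTo.mp hr))).trans
    (List.toFinset_card_le _)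

theorem card_assignedTo_le_card_assignedIn (hh : h ∈ E) :
    (assignedTo M h).card ≤ (assignedIn M E).card :=
  Finset.card_le_card fun _ hr => mem_assignedIn.mpr ⟨h, hh, mem_assignedTo.mp hr⟩

theorem unassigned_of_not_mem_assignedIn (hacc : ∀ p ∈ M, p.2 ∈ I.prefR p.1)
    (hE : ∀ h ∈ I.prefR r, h ∈ E) (hr : r ∉ assignedIn M E) : ∀ h, (r, h) ∉ M :=
  fun h hm => hr (mem_assignedIn.mpr ⟨h, hE h (hacc _ hm), hm⟩)

theorem IsMatching.vacant_of_prefH_eq_singleton (hM : I.IsMatching M) (hh : I.prefH h = [r])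
    (hr : (r, h) ∉ M) : ∀ r', (r', h) ∉ M := by
  intro r' hm
  have := (hM.1 _ hm).2
  rw [hh, List.mem_singleton] at this
  exact hr (this ▸ hm)

theorem assignedIn_move_of_mem (hh : h ∈ E) :
    assignedIn (move M r h) E = insert r ((assignedIn M E).erase r) := by
  ext r'
  by_cases hr : r' = r <;> simp [move, hr, hh]

theorem assignedIn_move_subset_of_not_mem (hh : h ∉ E) :
    assignedIn (move M r h) E ⊆ assignedIn M E := by
  intro r'
  simp only [mem_assignedIn, move, Finset.mem_union, Finset.mem_filter, Finset.mem_singleton]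
  rintro ⟨h', hE, ⟨hm, -⟩ | heq⟩
  · exact ⟨h', hE, hm⟩
  · cases heq
    exact absurd hE hh

theorem FeasibleCaps.move_iff (hF : I.FeasibleCaps M) :
    I.FeasibleCaps (move M r h) ↔
      ∀ E ∈ I.regions, h ∈ E → ((assignedIn M E).erase r).card < I.cap E := by
  have hcard : ∀ {E}, h ∈ E →
      (assignedIn (move M r h) E).card = ((assignedIn M E).erase r).card + 1 := fun hh => by
    rw [assignedIn_move_of_mem hh, Finset.card_insert_of_notMem (Finset.notMem_erase r _)]
  constructor
  · intro hmove E hE hh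
    have := hmove E hE
    rwa [hcard hh] at this
  · intro hlt E hE
    by_cases hh : h ∈ E
    · exact (hcard hh).trans_le (hlt E hE hh)
    · exact (Finset.card_le_card (assignedIn_move_subset_of_not_mem hh)).trans (hF E hE)

theorem isSBP_of_vacant (hvac : ∀ r', (r', h) ∉ M) (hacc : h ∈ I.prefR r ∧ r ∈ I.prefH h)
    (hq : 0 < I.q h)
    (himp : (∀ h', (r, h') ∉ M) ∨ ∃ h', (r, h') ∈ M ∧ ListPref (I.prefR r) h h')
    (hmove : I.FeasibleCaps (move M r h)) : I.IsSBP M r h :=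
  ⟨⟨hvac r, hacc, himp, Or.inl (by rwa [assignedTo_eq_empty.mpr hvac, Finset.card_empty])⟩,
    Or.inl hmove⟩

theorem isSBP_of_unassigned_of_prefH {r' : R} (hun : ∀ h', (r, h') ∉ M)
    (hacc : h ∈ I.prefR r ∧ r ∈ I.prefH h) (hr' : (r', h) ∈ M)
    (hpref : ListPref (I.prefH h) r r') : I.IsSBP M r h :=
  have hdisplace : ∃ r' ∈ assignedTo M h, ListPref (I.prefH h) r r' :=
    ⟨r', mem_assignedTo.mpr hr', hpref⟩
  ⟨⟨hun h, hacc, Or.inl hun, Or.inr hdisplace⟩, Or.inr hdisplace⟩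

theorem IsStronglyStable.exists_region_of_prefers_vacant (hM : I.IsStronglyStable M)
    (hr : (r, h') ∈ M) (hpref : ListPref (I.prefR r) h h') (hrh : r ∈ I.prefH h)
    (hvac : ∀ r', (r', h) ∉ M) (hq : 0 < I.q h) :
    ∃ E ∈ I.regions, h ∈ E ∧ I.cap E ≤ ((assignedIn M E).erase r).card := by
  by_contra! hfull
  exact hM.2.2 r h <| isSBP_of_vacant hvac ⟨hpref.mem_left, hrh⟩ hq (Or.inr ⟨h', hr, hpref⟩)
    (hM.2.1.move_iff.mpr hfull)

theorem IsMatching.not_isBlockingPair_of_mem_head (hM : I.IsMatching M) (hr : (r, h') ∈ M)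
    (hhead : (I.prefR r).head? = some h') : ¬ I.IsBlockingPair M r h := by
  obtain ⟨l, hl⟩ := List.head?_eq_some_iff.mp hhead
  rintro ⟨-, -, hunassigned | ⟨h'', hr'', hpref⟩, -⟩
  · exact hunassigned h' hr
  · obtain rfl := hM.2.1 _ _ _ hr'' hr
    rw [hl] at hpref
    exact not_listPref_head _ _ _ hpref

theorem IsMatching.not_isBlockingPair_of_head_mem {r₀ : R} (hM : I.IsMatching M)
    (hq : I.q h ≤ 1) (hr₀ : (r₀, h) ∈ M) (hhead : (I.prefH h).head? = some r₀) :
    ¬ I.IsBlockingPair M r h := by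
  obtain ⟨l, hl⟩ := List.head?_eq_some_iff.mp hhead
  have hr₀' : r₀ ∈ assignedTo M h := mem_assignedTo.mpr hr₀
  rintro ⟨-, -, -, hlt | ⟨r', hr', hpref⟩⟩
  · have := Finset.card_pos.mpr ⟨r₀, hr₀'⟩
    omega
  · obtain rfl := Finset.card_le_one.mp ((hM.2.2 h).trans hq) _ hr' _ hr₀'
    rw [hl] at hpref
    exact not_listPref_head _ _ _ hpref

theorem FeasibleCaps.not_isSBP_of_vacant (hF : I.FeasibleCaps M) (hvac : ∀ r', (r', h) ∉ M)
    (hE : E ∈ I.regions) (hh : h ∈ E) (hcap : I.cap E ≤ ((assignedIn M E).erase r).card) :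
    ¬ I.IsSBP M r h := by
  rintro ⟨-, hmove | ⟨r', hr', -⟩⟩
  · exact absurd (hF.move_iff.mp hmove E hE hh) (not_lt.mpr hcap)
  · exact hvac r' (mem_assignedTo.mp hr')

section Cycle

variable {r₁ r₂ : R} {h₁ h₂ : H}

/-- If nobody but `r₁` occupies the region, then either the unassigned `r₂` displaces `r₁` from
`h₁`, or `r₁` moves to the empty `h₁` without raising the region's count. -/
theorem IsStronglyStable.not_assignedIn_subset_singleton_of_cycle
    (hM : I.IsStronglyStable M) (hE : E ∈ I.regions) (hcap : 0 < I.cap E)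
    (hE₁ : ∀ E' ∈ I.regions, h₁ ∈ E' → E' = E) (h₁E : h₁ ∈ E) (h₂E : h₂ ∈ E) (hne : h₁ ≠ h₂)
    (hq₁ : 0 < I.q h₁) (hr₁ : I.prefR r₁ = [h₁, h₂]) (hr₂ : I.prefR r₂ = [h₂, h₁])
    (hh₁ : I.prefH h₁ = [r₂, r₁]) : ¬ assignedIn M E ⊆ {r₁} := by
  intro hsub
  obtain ⟨⟨hacc, -, -⟩, hF, hstable⟩ := hM
  have hr₁₂ : r₁ ≠ r₂ := by
    rintro rfl
    simp_all
  have hr₂_unassigned : ∀ h, (r₂, h) ∉ M :=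
    unassigned_of_not_mem_assignedIn (fun p hp => (hacc p hp).1) (by simp [hr₂, h₁E, h₂E])
      fun hr₂E => hr₁₂ (Finset.mem_singleton.mp (hsub hr₂E)).symm
  by_cases hr₁h₁ : (r₁, h₁) ∈ M
  · exact hstable r₂ h₁ <| isSBP_of_unassigned_of_prefH hr₂_unassigned
      ⟨by simp [hr₂], by simp [hh₁]⟩ hr₁h₁ (by rw [hh₁]; exact listPref_pair hr₁₂.symm)
  have hvac : ∀ r, (r, h₁) ∉ M := by
    intro r hm
    have := (hacc _ hm).2
    simp only [hh₁, List.mem_cons, List.not_mem_nil, or_false] at this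
    rcases this with rfl | rfl
    exacts [hr₂_unassigned _ hm, hr₁h₁ hm]
  have hmove : I.FeasibleCaps (move M r₁ h₁) := by
    refine hF.move_iff.mpr fun E' hE' hh => ?_
    obtain rfl := hE₁ E' hE' hh
    rwa [Finset.erase_eq_empty_iff _ _ |>.mpr (Finset.subset_singleton_iff.mp hsub),
      Finset.card_empty]
  refine hstable r₁ h₁ (isSBP_of_vacant hvac ⟨by simp [hr₁], by simp [hh₁]⟩ hq₁ ?_ hmove)
  by_cases hassigned : ∃ h, (r₁, h) ∈ M
  · obtain ⟨h, hm⟩ := hassigned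
    have : h = h₁ ∨ h = h₂ := by simpa [hr₁] using (hacc _ hm).1
    obtain rfl | rfl := this
    · exact absurd hm hr₁h₁
    · exact Or.inr ⟨h, hm, by rw [hr₁]; exact listPref_pair hne⟩
  · exact Or.inl fun h hm => hassigned ⟨h, hm⟩

theorem IsStronglyStable.not_assignedIn_subset_of_cycle (hM : I.IsStronglyStable M)
    (hE : E ∈ I.regions) (hcap : I.cap E = 1)
    (hE₁ : ∀ E' ∈ I.regions, h₁ ∈ E' → E' = E) (hE₂ : ∀ E' ∈ I.regions, h₂ ∈ E' → E' = E)
    (h₁E : h₁ ∈ E) (h₂E : h₂ ∈ E) (hne : h₁ ≠ h₂) (hq₁ : 0 < I.q h₁) (hq₂ : 0 < I.q h₂)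
    (hr₁ : I.prefR r₁ = [h₁, h₂]) (hr₂ : I.prefR r₂ = [h₂, h₁])
    (hh₁ : I.prefH h₁ = [r₂, r₁]) (hh₂ : I.prefH h₂ = [r₁, r₂]) :
    ¬ assignedIn M E ⊆ {r₁, r₂} := by
  intro hsub
  have hcard : (assignedIn M E).card ≤ 1 := hcap ▸ hM.2.1 E hE
  -- the hypotheses are symmetric under swapping `(r₁, h₁)` with `(r₂, h₂)`
  by_cases hr₂E : r₂ ∈ assignedIn M E
  · refine hM.not_assignedIn_subset_singleton_of_cycle hE (by omega) hE₂ h₂E h₁E hne.symm hq₂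
      hr₂ hr₁ hh₂ fun r hr => ?_
    exact Finset.mem_singleton.mpr (Finset.card_le_one.mp hcard r hr r₂ hr₂E)
  · refine hM.not_assignedIn_subset_singleton_of_cycle hE (by omega) hE₁ h₁E h₂E hne hq₁
      hr₁ hr₂ hh₁ fun r hr => ?_
    rcases Finset.mem_insert.mp (hsub hr) with rfl | hr'
    · exact Finset.mem_singleton_self r
    · exact absurd (Finset.mem_singleton.mp hr' ▸ hr) hr₂E

end Cycle

end HRRC

/-! ### The instance `I'` -/

open HRRC

section Instance

variable {n m : ℕ}

theorem regions11_eq_of_mem {m₂ : ℕ} {E E' : Finset (Hos11 n m)} {h : Hos11 n m}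
    (hE : E ∈ regions11 m₂) (hE' : E' ∈ regions11 m₂) (hh : h ∈ E) (hh' : h ∈ E') : E = E' := by
  simp only [regions11, Set.mem_ofPred_eq] at hE hE'
  rcases hE with ⟨i, rfl | rfl | rfl⟩ | ⟨j, ⟨hj, rfl⟩ | ⟨hj, rfl | rfl⟩ | rfl⟩ <;>
  simp only [Finset.mem_insert, Finset.mem_singleton] at hh <;>
  rcases hh with rfl | rfl | rfl <;>
  rcases hE' with ⟨i', rfl | rfl | rfl⟩ | ⟨j', ⟨hj', rfl⟩ | ⟨hj', rfl | rfl⟩ | rfl⟩ <;>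
  simp_all <;> omega

theorem cap11_eq_one {E : Finset (Hos11 n m)} (hE : ∀ i, Hos11.x i 2 ∉ E) : cap11 E = 1 := by
  rw [cap11, if_neg]
  rintro ⟨i, rfl⟩
  exact hE i (by simp)

theorem cap11_eq_two (i : Fin n) :
    cap11 ({Hos11.b i 2, Hos11.b i 3, Hos11.x i 2} : Finset (Hos11 n m)) = 2 :=
  if_pos ⟨i, rfl⟩

abbrev IsLitPos (m₂ : ℕ) (j : Fin m) (l : Fin 3) : Prop :=
  (l : ℕ) < if (j : ℕ) < m₂ then 2 else 3

/-- The hospital `a'_{j,1}` or `a'_{j,3}` that `c'_{j,l}` ranks second. -/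
def clauseHos (j : Fin m) (l : Fin 3) : Hos11 n m :=
  if (l : ℕ) < 2 then .a j 0 else .a j 2

theorem prefRes11_c (m₂ : ℕ) (v : Fin m → Fin 3 → Fin n) (kIdx : Fin m → Fin 3 → Fin 3)
    (j : Fin m) (l : Fin 3) :
    prefRes11 m₂ v kIdx (.c j l) =
      if IsLitPos m₂ j l then [.x (v j l) (kIdx j l), clauseHos j l] else [] := by
  by_cases hl : (l : ℕ) < 2 <;> by_cases hj : (j : ℕ) < m₂ <;>
    simp [prefRes11, clauseHos, hl, hj]

theorem c_mem_prefHos11_clauseHos {m₂ : ℕ} {occ : Fin n → Fin 3 → Fin m × Fin 3} {j : Fin m}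
    {l : Fin 3} (hl : IsLitPos m₂ j l) : Res11.c j l ∈ prefHos11 m₂ occ (clauseHos j l) := by
  fin_cases l <;> by_cases hj : (j : ℕ) < m₂ <;> simp_all [clauseHos, prefHos11]

theorem prefHos11_length_le_one_or_mem_region (m₂ : ℕ) (occ : Fin n → Fin 3 → Fin m × Fin 3)
    (h : Hos11 n m) :
    (prefHos11 m₂ occ h).length ≤ 1 ∨ ∃ E ∈ regions11 m₂, h ∈ E ∧ cap11 E = 1 := by
  cases h with
  | b i s => left; simp only [prefHos11]; split <;> simp
  | x i k => left; simp [prefHos11]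
  | a j s =>
    by_cases hj : (j : ℕ) < m₂ <;> fin_cases s
    · exact .inr ⟨_, Or.inr ⟨j, Or.inl ⟨hj, rfl⟩⟩, by simp, cap11_eq_one (by simp)⟩
    · left; simp [prefHos11, hj]
    · left; simp [prefHos11, hj]
    · exact .inr ⟨_, Or.inr ⟨j, Or.inr (Or.inl ⟨hj, Or.inl rfl⟩)⟩, by simp, cap11_eq_one (by simp)⟩
    · left; simp [prefHos11, hj]
    · exact .inr ⟨_, Or.inr ⟨j, Or.inr (Or.inl ⟨hj, Or.inr rfl⟩)⟩, by simp, cap11_eq_one (by simp)⟩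
  | y j | t j => left; simp [prefHos11]
  | g2 j | g4 j =>
    exact .inr ⟨_, Or.inr ⟨j, Or.inr (Or.inr rfl)⟩, by simp, cap11_eq_one (by simp)⟩

def literalValue (v : Fin m → Fin 3 → Fin n) (pol : Fin m → Fin 3 → Bool) (a : Fin n → Bool)
    (j : Fin m) (l : Fin 3) : Bool :=
  if pol j l then a (v j l) else !(a (v j l))

theorem literalValue_occ {v : Fin m → Fin 3 → Fin n} {pol : Fin m → Fin 3 → Bool}
    {occ : Fin n → Fin 3 → Fin m × Fin 3} (hoccVar : ∀ i k, v (occ i k).1 (occ i k).2 = i)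
    (hoccPol : ∀ i k, pol (occ i k).1 (occ i k).2 = decide ((k : ℕ) < 2)) (a : Fin n → Bool)
    (i : Fin n) (k : Fin 3) :
    literalValue v pol a (occ i k).1 (occ i k).2 = if (k : ℕ) < 2 then a i else !a i := by
  simp [literalValue, hoccVar, hoccPol]

end Instance

/-! ### From a strongly stable matching to a satisfying assignment -/

def assignmentOf {n m : ℕ} (M : Finset (Res11 n m × Hos11 n m)) (i : Fin n) : Bool :=
  decide ((Res11.e i 0, Hos11.b i 0) ∈ M ∨ (Res11.e i 1, Hos11.b i 1) ∈ M)

namespace HRRC.IsStronglyStable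

variable {n m m₂ : ℕ} {v : Fin m → Fin 3 → Fin n} {occ : Fin n → Fin 3 → Fin m × Fin 3}
  {kIdx : Fin m → Fin 3 → Fin 3} {M : Finset (Res11 n m × Hos11 n m)}

local notation "I'" => ppnInstance223 m₂ v occ kIdx

theorem z_mem_t (hM : IsStronglyStable I' M) (j : Fin m) : (Res11.z j, Hos11.t j) ∈ M := by
  by_contra hzt
  have hG : ({Hos11.g2 j, Hos11.g4 j, Hos11.t j} : Finset (Hos11 n m)) ∈ regions11 m₂ :=
    Or.inr ⟨j, Or.inr (Or.inr rfl)⟩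
  refine hM.not_assignedIn_subset_of_cycle (r₁ := .g1 j) (r₂ := .g3 j) hG
    (cap11_eq_one (by simp)) (fun E hE hh => regions11_eq_of_mem hE hG hh (by simp))
    (fun E hE hh => regions11_eq_of_mem hE hG hh (by simp)) (by simp) (by simp) (by simp)
    Nat.one_pos Nat.one_pos rfl rfl rfl rfl fun r hr => ?_
  obtain ⟨h, hh, hm⟩ := mem_assignedIn.mp hr
  have hacc := (hM.1.1 _ hm).2
  simp only [Finset.mem_insert, Finset.mem_singleton] at hh
  rcases hh with rfl | rfl | rfl <;> simp [ppnInstance223, prefHos11] at hacc ⊢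
  · tauto
  · tauto
  · exact absurd (hacc ▸ hm) hzt

theorem cap11_le_of_prefers_vacant (hM : IsStronglyStable I' M) {r : Res11 n m}
    {h h' : Hos11 n m} {E : Finset (Hos11 n m)} (hE : E ∈ regions11 m₂) (hhE : h ∈ E)
    (hr : (r, h') ∈ M) (hpref : ListPref (prefRes11 m₂ v kIdx r) h h')
    (hh : prefHos11 m₂ occ h = [r]) :
    cap11 E ≤ ((assignedIn M E).erase r).card := by
  have hrh : (r, h) ∉ M := fun hm => hpref.ne (hM.1.2.1 _ _ _ hm hr)
  obtain ⟨E', hE', hhE', hcap⟩ := hM.exists_region_of_prefers_vacant hr hpref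
    (by simp [ppnInstance223, hh]) (hM.1.vacant_of_prefH_eq_singleton hh hrh) Nat.one_pos
  rwa [regions11_eq_of_mem hE' hE hhE' hhE] at hcap

theorem exists_other_of_prefers_vacant (hM : IsStronglyStable I' M) {r : Res11 n m}
    {h h' : Hos11 n m} {E : Finset (Hos11 n m)} (hE : E ∈ regions11 m₂) (hcap : cap11 E = 1)
    (hhE : h ∈ E) (hr : (r, h') ∈ M) (hpref : ListPref (prefRes11 m₂ v kIdx r) h h')
    (hh : prefHos11 m₂ occ h = [r]) :
    ∃ r' ≠ r, ∃ h'' ∈ E, (r', h'') ∈ M ∧ r' ∈ prefHos11 m₂ occ h'' := by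
  have hle := hM.cap11_le_of_prefers_vacant hE hhE hr hpref hh
  rw [hcap] at hle
  obtain ⟨r', hr'⟩ := Finset.card_pos.mp hle
  obtain ⟨hne, hr'⟩ := Finset.mem_erase.mp hr'
  obtain ⟨h'', hh'', hm⟩ := mem_assignedIn.mp hr'
  exact ⟨r', hne, h'', hh'', hm, (hM.1.1 _ hm).2⟩

theorem exists_c_mem_clauseHos_of_mem_a0 (hM : IsStronglyStable I' M) {r : Res11 n m}
    {j : Fin m} (hr : (r, Hos11.a j 0) ∈ M) :
    ∃ l, IsLitPos m₂ j l ∧ (Res11.c j l, clauseHos j l) ∈ M := by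
  have hacc := (hM.1.1 _ hr).2
  simp [ppnInstance223, prefHos11] at hacc
  rcases hacc with rfl | rfl
  · exact ⟨0, by unfold IsLitPos; split <;> omega, hr⟩
  · exact ⟨1, by unfold IsLitPos; split <;> omega, hr⟩

theorem exists_mem_a0_of_d_mem_a2 (hM : IsStronglyStable I' M) {j : Fin m}
    (hd : (Res11.d j, Hos11.a j 2) ∈ M) : ∃ r, (r, Hos11.a j 0) ∈ M := by
  have hj : ¬ (j : ℕ) < m₂ := by
    intro hj
    simpa [ppnInstance223, prefRes11, hj] using (hM.1.1 _ hd).1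
  obtain ⟨r, hne, h, hh, hm, hacc⟩ := hM.exists_other_of_prefers_vacant
    (h := Hos11.a j 1) (E := {Hos11.a j 0, Hos11.a j 1})
    (Or.inr ⟨j, Or.inr (Or.inl ⟨hj, Or.inl rfl⟩)⟩) (cap11_eq_one (by simp)) (by simp) hd
    (by simpa [prefRes11, hj] using listPref_pair (by simp)) (by simp [prefHos11, hj])
  simp only [Finset.mem_insert, Finset.mem_singleton] at hh
  rcases hh with rfl | rfl
  · exact ⟨r, hm⟩
  · simp [prefHos11, hj] at hacc
    exact absurd hacc hne

theorem exists_c_mem_clauseHos (hM : IsStronglyStable I' M) (j : Fin m) :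
    ∃ l, IsLitPos m₂ j l ∧ (Res11.c j l, clauseHos j l) ∈ M := by
  have hpref : ListPref (prefRes11 m₂ v kIdx (.z j)) (.y j) (.t j) := listPref_pair (by simp)
  by_cases hj : (j : ℕ) < m₂
  · obtain ⟨r, hne, h, hh, hm, hacc⟩ := hM.exists_other_of_prefers_vacant
      (E := {Hos11.a j 0, Hos11.y j}) (Or.inr ⟨j, Or.inl ⟨hj, rfl⟩⟩) (cap11_eq_one (by simp))
      (by simp) (hM.z_mem_t j) hpref rfl
    simp only [Finset.mem_insert, Finset.mem_singleton] at hh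
    rcases hh with rfl | rfl
    · exact hM.exists_c_mem_clauseHos_of_mem_a0 hm
    · simp [prefHos11] at hacc
      exact absurd hacc hne
  · obtain ⟨r, hne, h, hh, hm, hacc⟩ := hM.exists_other_of_prefers_vacant
      (E := {Hos11.a j 2, Hos11.y j}) (Or.inr ⟨j, Or.inr (Or.inl ⟨hj, Or.inr rfl⟩)⟩)
      (cap11_eq_one (by simp)) (by simp) (hM.z_mem_t j) hpref rfl
    simp only [Finset.mem_insert, Finset.mem_singleton] at hh
    rcases hh with rfl | rfl
    · simp [prefHos11, hj] at hacc
      rcases hacc with rfl | rfl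
      · obtain ⟨r, hr⟩ := hM.exists_mem_a0_of_d_mem_a2 hm
        exact hM.exists_c_mem_clauseHos_of_mem_a0 hr
      · exact ⟨2, by simp [IsLitPos, hj], hm⟩
    · simp [prefHos11] at hacc
      exact absurd hacc hne

theorem assignmentOf_eq_false_of_prefers_x2 (hM : IsStronglyStable I' M) {i : Fin n}
    {h₀ : Hos11 n m} (hr : (Res11.c (occ i 2).1 (occ i 2).2, h₀) ∈ M)
    (hpref : ListPref (prefRes11 m₂ v kIdx (.c (occ i 2).1 (occ i 2).2)) (.x i 2) h₀) :
    assignmentOf M i = false := by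
  have hcap := hM.cap11_le_of_prefers_vacant (E := {Hos11.b i 2, Hos11.b i 3, Hos11.x i 2})
    (Or.inl ⟨i, Or.inr (Or.inr rfl)⟩) (by simp) hr hpref rfl
  rw [cap11_eq_two] at hcap
  set T := (assignedIn M {Hos11.b i 2, Hos11.b i 3, Hos11.x i 2}).erase
    (Res11.c (occ i 2).1 (occ i 2).2)
  have hT : T ⊆ {Res11.e i 0, Res11.e i 1} := by
    intro r hrT
    obtain ⟨hne, hrE⟩ := Finset.mem_erase.mp hrT
    obtain ⟨h, hh, hm⟩ := mem_assignedIn.mp hrE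
    have hacc := (hM.1.1 _ hm).2
    simp only [Finset.mem_insert, Finset.mem_singleton] at hh ⊢
    rcases hh with rfl | rfl | rfl <;> simp [ppnInstance223, prefHos11] at hacc
    exacts [Or.inl hacc, Or.inr hacc, absurd hacc hne]
  have hT_eq : T = {Res11.e i 0, Res11.e i 1} :=
    Finset.eq_of_subset_of_card_le hT (by rwa [Finset.card_pair (by simp)])
  have hout : ∀ r ∈ T, ∀ h ∉ ({Hos11.b i 2, Hos11.b i 3, Hos11.x i 2} : Finset _),
      (r, h) ∉ M := by
    intro r hrT h hh hm
    obtain ⟨h', hh', hm'⟩ := mem_assignedIn.mp (Finset.mem_of_mem_erase hrT)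
    exact hh (hM.1.2.1 _ _ _ hm hm' ▸ hh')
  have he₀ : Res11.e i 0 ∈ T := by simp [hT_eq]
  have he₁ : Res11.e i 1 ∈ T := by simp [hT_eq]
  simp [assignmentOf, hout _ he₀ (.b i 0) (by simp), hout _ he₁ (.b i 1) (by simp)]

theorem occurrence_true_of_prefers_x (hM : IsStronglyStable I' M) {i : Fin n} {k : Fin 3}
    {h₀ : Hos11 n m} (hr : (Res11.c (occ i k).1 (occ i k).2, h₀) ∈ M)
    (hpref : ListPref (prefRes11 m₂ v kIdx (.c (occ i k).1 (occ i k).2)) (.x i k) h₀) :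
    (if (k : ℕ) < 2 then assignmentOf M i else !assignmentOf M i) = true := by
  fin_cases k
  · obtain ⟨r, hne, h, hh, hm, hacc⟩ := hM.exists_other_of_prefers_vacant
      (E := {Hos11.b i 0, Hos11.x i 0}) (Or.inl ⟨i, Or.inl rfl⟩) (cap11_eq_one (by simp))
      (by simp) hr hpref rfl
    simp only [Finset.mem_insert, Finset.mem_singleton] at hh
    rcases hh with rfl | rfl <;> simp [prefHos11] at hacc
    · simp [assignmentOf, ← hacc, hm]
    · exact absurd hacc hne
  · obtain ⟨r, hne, h, hh, hm, hacc⟩ := hM.exists_other_of_prefers_vacant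
      (E := {Hos11.b i 1, Hos11.x i 1}) (Or.inl ⟨i, Or.inr (Or.inl rfl)⟩)
      (cap11_eq_one (by simp)) (by simp) hr hpref rfl
    simp only [Finset.mem_insert, Finset.mem_singleton] at hh
    rcases hh with rfl | rfl <;> simp [prefHos11] at hacc
    · simp [assignmentOf, ← hacc, hm]
    · exact absurd hacc hne
  · simpa using hM.assignmentOf_eq_false_of_prefers_x2 hr hpref

theorem assignmentOf_satisfies {pol : Fin m → Fin 3 → Bool}
    (hoccPol : ∀ i k, pol (occ i k).1 (occ i k).2 = decide ((k : ℕ) < 2))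
    (hkIdx : ∀ j l, IsLitPos m₂ j l → occ (v j l) (kIdx j l) = (j, l))
    (hM : IsStronglyStable I' M) (j : Fin m) :
    ∃ l, IsLitPos m₂ j l ∧ literalValue v pol (assignmentOf M) j l = true := by
  obtain ⟨l, hl, hm⟩ := hM.exists_c_mem_clauseHos j
  have hocc := hkIdx j l hl
  have htrue := hM.occurrence_true_of_prefers_x (i := v j l) (k := kIdx j l)
    (h₀ := clauseHos j l) (by rwa [hocc]) (by
      rw [hocc, prefRes11_c, if_pos hl]
      exact listPref_pair (by unfold clauseHos; split <;> simp))
  have hpol := hoccPol (v j l) (kIdx j l)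
  rw [hocc] at hpol
  exact ⟨l, hl, by simpa [literalValue, hpol] using htrue⟩

end HRRC.IsStronglyStable

/-! ### From a satisfying assignment to a strongly stable matching -/

section Backward

variable {n m : ℕ} (m₂ : ℕ) (v : Fin m → Fin 3 → Fin n) (pol : Fin m → Fin 3 → Bool)
  (kIdx : Fin m → Fin 3 → Fin 3) (a : Fin n → Bool)

-- `2` also when no literal of clause `j` is true.
def firstTrueLit (j : Fin m) : Fin 3 :=
  if literalValue v pol a j 0 then 0 else if literalValue v pol a j 1 then 1 else 2

def satAssign : Res11 n m → Option (Hos11 n m)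
  | .e i t =>
      some (if (t : ℕ) = 0 then (if a i then .b i 0 else .b i 2)
        else (if a i then .b i 1 else .b i 3))
  | .c j l =>
      if IsLitPos m₂ j l then
        if literalValue v pol a j l then
          if firstTrueLit v pol a j = l then some (clauseHos j l) else none
        else some (.x (v j l) (kIdx j l))
      else none
  | .d j =>
      if (j : ℕ) < m₂ then none
      else some (if (firstTrueLit v pol a j : ℕ) < 2 then .a j 2 else .a j 1)
  | .g1 _ | .g3 _ => none
  | .z j => some (.t j)

def Res11.toSum : Res11 n m → (Fin n × Fin 2) ⊕ (Fin m × Fin 3) ⊕ (Fin m × Fin 4)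
  | .e i t => .inl (i, t)
  | .c j l => .inr (.inl (j, l))
  | .d j => .inr (.inr (j, 0))
  | .g1 j => .inr (.inr (j, 1))
  | .g3 j => .inr (.inr (j, 2))
  | .z j => .inr (.inr (j, 3))

def Hos11.toSum : Hos11 n m → (Fin n × Fin 4) ⊕ (Fin n × Fin 3) ⊕ (Fin m × Fin 3) ⊕ (Fin m × Fin 4)
  | .b i s => .inl (i, s)
  | .x i k => .inr (.inl (i, k))
  | .a j s => .inr (.inr (.inl (j, s)))
  | .y j => .inr (.inr (.inr (j, 0)))
  | .g2 j => .inr (.inr (.inr (j, 1)))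
  | .g4 j => .inr (.inr (.inr (j, 2)))
  | .t j => .inr (.inr (.inr (j, 3)))

noncomputable instance : Fintype (Res11 n m) :=
  Fintype.ofInjective Res11.toSum fun x y h => by cases x <;> cases y <;> simp_all [Res11.toSum]

noncomputable instance : Fintype (Hos11 n m) :=
  Fintype.ofInjective Hos11.toSum fun x y h => by cases x <;> cases y <;> simp_all [Hos11.toSum]

noncomputable def satMatching : Finset (Res11 n m × Hos11 n m) :=
  Finset.univ.filter fun p => satAssign m₂ v pol kIdx a p.1 = some p.2

variable {m₂ v pol kIdx a} {occ : Fin n → Fin 3 → Fin m × Fin 3}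

local notation "I'" => ppnInstance223 m₂ v occ kIdx
local notation "Mₐ" => satMatching m₂ v pol kIdx a

@[simp] theorem mem_satMatching {r : Res11 n m} {h : Hos11 n m} :
    (r, h) ∈ Mₐ ↔ satAssign m₂ v pol kIdx a r = some h := by
  simp [satMatching]

theorem firstTrueLit_le {j : Fin m} {l : Fin 3} (hl : literalValue v pol a j l = true) :
    firstTrueLit v pol a j ≤ l := by
  unfold firstTrueLit
  fin_cases l <;> split_ifs <;> simp_all

theorem firstTrueLit_spec {j : Fin m} {l : Fin 3} (hl : IsLitPos m₂ j l)
    (hlit : literalValue v pol a j l = true) :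
    IsLitPos m₂ j (firstTrueLit v pol a j) ∧
      literalValue v pol a j (firstTrueLit v pol a j) = true := by
  have hle := firstTrueLit_le hlit
  unfold firstTrueLit at hle ⊢
  split_ifs at hle ⊢ with h0 h1
  · exact ⟨by unfold IsLitPos; split <;> simp, h0⟩
  · exact ⟨by unfold IsLitPos; split <;> simp, h1⟩
  · obtain rfl : l = 2 := le_antisymm (Fin.le_last l) hle
    exact ⟨hl, hlit⟩

theorem kIdx_occ (hoccValid : ∀ i k, IsLitPos m₂ (occ i k).1 (occ i k).2)
    (hoccVar : ∀ i k, v (occ i k).1 (occ i k).2 = i) (hoccInj : ∀ i, Function.Injective (occ i))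
    (hkIdx : ∀ j l, IsLitPos m₂ j l → occ (v j l) (kIdx j l) = (j, l)) (i : Fin n) (k : Fin 3) :
    kIdx (occ i k).1 (occ i k).2 = k := by
  apply hoccInj i
  have := hkIdx _ _ (hoccValid i k)
  rwa [hoccVar] at this

theorem satAssign_c_occ (hoccValid : ∀ i k, IsLitPos m₂ (occ i k).1 (occ i k).2)
    (hoccVar : ∀ i k, v (occ i k).1 (occ i k).2 = i)
    (hoccPol : ∀ i k, pol (occ i k).1 (occ i k).2 = decide ((k : ℕ) < 2))
    (hoccInj : ∀ i, Function.Injective (occ i))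
    (hkIdx : ∀ j l, IsLitPos m₂ j l → occ (v j l) (kIdx j l) = (j, l)) {i : Fin n} {k : Fin 3}
    (hfalse : (if (k : ℕ) < 2 then a i else !a i) = false) :
    satAssign m₂ v pol kIdx a (.c (occ i k).1 (occ i k).2) = some (.x i k) := by
  rw [← literalValue_occ hoccVar hoccPol] at hfalse
  simp [satAssign, hoccValid i k, hfalse, hoccVar, kIdx_occ hoccValid hoccVar hoccInj hkIdx]

theorem satAssign_c_firstTrueLit {j : Fin m} {l : Fin 3} (hl : IsLitPos m₂ j l)
    (hlit : literalValue v pol a j l = true) :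
    satAssign m₂ v pol kIdx a (.c j (firstTrueLit v pol a j)) =
      some (clauseHos j (firstTrueLit v pol a j)) := by
  obtain ⟨hl', hlit'⟩ := firstTrueLit_spec hl hlit
  simp [satAssign, hl', hlit']

theorem literalValue_eq_false_of_satAssign_eq_x {j : Fin m} {l : Fin 3} {i : Fin n}
    {k : Fin 3} (h : satAssign m₂ v pol kIdx a (.c j l) = some (.x i k)) :
    literalValue v pol a j l = false := by
  simp only [satAssign] at h
  split_ifs at h with _ hlit
  · unfold clauseHos at h
    split_ifs at h <;> simp at h
  all_goals simp_all

theorem firstTrueLit_eq_of_satAssign_eq_a {j j' : Fin m} {l s : Fin 3}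
    (h : satAssign m₂ v pol kIdx a (.c j l) = some (.a j' s)) : firstTrueLit v pol a j = l := by
  simp only [satAssign] at h
  split_ifs at h <;> simp_all

theorem satMatching_acceptable
    (hkIdx : ∀ j l, IsLitPos m₂ j l → occ (v j l) (kIdx j l) = (j, l))
    {r : Res11 n m} {h : Hos11 n m} (hm : (r, h) ∈ Mₐ) :
    h ∈ prefRes11 m₂ v kIdx r ∧ r ∈ prefHos11 m₂ occ h := by
  rw [mem_satMatching] at hm
  cases r with
  | e i t =>
    simp only [satAssign, Option.some.injEq] at hm
    subst hm
    fin_cases t <;> cases a i <;> simp [prefRes11, prefHos11]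
  | c j l =>
    simp only [satAssign] at hm
    split_ifs at hm with hl hlit hsel <;> cases hm <;> rw [prefRes11_c, if_pos hl]
    · exact ⟨by simp, c_mem_prefHos11_clauseHos hl⟩
    · exact ⟨by simp, by simp [prefHos11, hkIdx j l hl]⟩
  | d j =>
    simp only [satAssign] at hm
    split_ifs at hm with hj hsel <;> cases hm <;> simp [prefRes11, prefHos11, hj]
  | g1 j | g3 j => simp [satAssign] at hm
  | z j =>
    cases hm
    simp [prefRes11, prefHos11]

theorem card_assignedIn_satMatching_le
    (hkIdx : ∀ j l, IsLitPos m₂ j l → occ (v j l) (kIdx j l) = (j, l))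
    {E : Finset (Hos11 n m)} (S : Finset (Res11 n m))
    (hS : ∀ r h, h ∈ E → r ∈ prefHos11 m₂ occ h → satAssign m₂ v pol kIdx a r = some h → r ∈ S) :
    (assignedIn Mₐ E).card ≤ S.card := by
  refine Finset.card_le_card fun r hr => ?_
  obtain ⟨h, hh, hm⟩ := mem_assignedIn.mp hr
  exact hS r h hh (satMatching_acceptable hkIdx hm).2 (mem_satMatching.mp hm)

theorem occurrence_eq_false_of_satAssign_eq_x (hoccVar : ∀ i k, v (occ i k).1 (occ i k).2 = i)
    (hoccPol : ∀ i k, pol (occ i k).1 (occ i k).2 = decide ((k : ℕ) < 2)) {i : Fin n}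
    {k : Fin 3} (hm : satAssign m₂ v pol kIdx a (.c (occ i k).1 (occ i k).2) = some (.x i k)) :
    (if (k : ℕ) < 2 then a i else !a i) = false := by
  rw [← literalValue_occ hoccVar hoccPol]
  exact literalValue_eq_false_of_satAssign_eq_x hm

theorem card_assignedIn_satMatching_le_of_variable
    (hoccVar : ∀ i k, v (occ i k).1 (occ i k).2 = i)
    (hoccPol : ∀ i k, pol (occ i k).1 (occ i k).2 = decide ((k : ℕ) < 2))
    (hkIdx : ∀ j l, IsLitPos m₂ j l → occ (v j l) (kIdx j l) = (j, l)) {i : Fin n}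
    {E : Finset (Hos11 n m)}
    (hE : E = {Hos11.b i 0, Hos11.x i 0} ∨ E = {Hos11.b i 1, Hos11.x i 1} ∨
      E = {Hos11.b i 2, Hos11.b i 3, Hos11.x i 2}) :
    (assignedIn Mₐ E).card ≤ cap11 E := by
  rcases hE with rfl | rfl | rfl
  · refine (card_assignedIn_satMatching_le hkIdx
      {if a i then .e i 0 else .c (occ i 0).1 (occ i 0).2} ?_).trans (by simp [cap11_eq_one])
    intro r h hh hacc hm
    simp only [Finset.mem_insert, Finset.mem_singleton] at hh
    rcases hh with rfl | rfl <;> simp [prefHos11] at hacc <;> subst hacc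
    · simp_all [satAssign]
    · simpa using occurrence_eq_false_of_satAssign_eq_x hoccVar hoccPol hm
  · refine (card_assignedIn_satMatching_le hkIdx
      {if a i then .e i 1 else .c (occ i 1).1 (occ i 1).2} ?_).trans (by simp [cap11_eq_one])
    intro r h hh hacc hm
    simp only [Finset.mem_insert, Finset.mem_singleton] at hh
    rcases hh with rfl | rfl <;> simp [prefHos11] at hacc <;> subst hacc
    · simp_all [satAssign]
    · simpa using occurrence_eq_false_of_satAssign_eq_x hoccVar hoccPol hm
  · refine (card_assignedIn_satMatching_le hkIdx
      (if a i then {.c (occ i 2).1 (occ i 2).2} else {.e i 0, .e i 1}) ?_).trans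
      (by rw [cap11_eq_two]; split <;> simp)
    intro r h hh hacc hm
    simp only [Finset.mem_insert, Finset.mem_singleton] at hh
    rcases hh with rfl | rfl | rfl <;> simp [prefHos11] at hacc <;> subst hacc
    · simp_all [satAssign]
    · simp_all [satAssign]
    · have ha : a i = true := by
        simpa using occurrence_eq_false_of_satAssign_eq_x hoccVar hoccPol hm
      simp [ha]

theorem card_assignedIn_satMatching_le_of_clause
    (hkIdx : ∀ j l, IsLitPos m₂ j l → occ (v j l) (kIdx j l) = (j, l)) {j : Fin m}
    {E : Finset (Hos11 n m)}
    (hE : ((j : ℕ) < m₂ ∧ E = {Hos11.a j 0, Hos11.y j}) ∨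
      (¬ (j : ℕ) < m₂ ∧ (E = {Hos11.a j 0, Hos11.a j 1} ∨ E = {Hos11.a j 2, Hos11.y j})) ∨
      E = {Hos11.g2 j, Hos11.g4 j, Hos11.t j}) :
    (assignedIn Mₐ E).card ≤ cap11 E := by
  set l₀ := firstTrueLit v pol a j
  rcases hE with ⟨hj, rfl⟩ | ⟨hj, rfl | rfl⟩ | rfl
  · refine (card_assignedIn_satMatching_le hkIdx {.c j l₀} ?_).trans (by simp [cap11_eq_one])
    intro r h hh hacc hm
    simp only [Finset.mem_insert, Finset.mem_singleton] at hh
    rcases hh with rfl | rfl <;> simp [prefHos11] at hacc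
    · rcases hacc with rfl | rfl <;> simp [l₀, firstTrueLit_eq_of_satAssign_eq_a hm]
    · simp [hacc, satAssign] at hm
  · refine (card_assignedIn_satMatching_le hkIdx {if (l₀ : ℕ) < 2 then .c j l₀ else .d j} ?_).trans
      (by simp [cap11_eq_one])
    intro r h hh hacc hm
    simp only [Finset.mem_insert, Finset.mem_singleton] at hh
    rcases hh with rfl | rfl <;> simp [prefHos11, hj] at hacc
    · rcases hacc with rfl | rfl <;> simp [l₀, firstTrueLit_eq_of_satAssign_eq_a hm]
    · subst hacc
      simp [satAssign, hj] at hm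
      simp [l₀, hm]
  · refine (card_assignedIn_satMatching_le hkIdx {if (l₀ : ℕ) < 2 then .d j else .c j 2} ?_).trans
      (by simp [cap11_eq_one])
    intro r h hh hacc hm
    simp only [Finset.mem_insert, Finset.mem_singleton] at hh
    rcases hh with rfl | rfl <;> simp [prefHos11, hj] at hacc
    · rcases hacc with rfl | rfl
      · simp [satAssign, hj] at hm
        simp [l₀, hm]
      · simp [l₀, firstTrueLit_eq_of_satAssign_eq_a hm]
    · simp [hacc, satAssign] at hm
  · refine (card_assignedIn_satMatching_le hkIdx {.z j} ?_).trans (by simp [cap11_eq_one])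
    intro r h hh hacc hm
    simp only [Finset.mem_insert, Finset.mem_singleton] at hh
    rcases hh with rfl | rfl | rfl <;> simp [prefHos11] at hacc
    · rcases hacc with rfl | rfl <;> simp [satAssign] at hm
    · rcases hacc with rfl | rfl <;> simp [satAssign] at hm
    · simp [hacc]

theorem satMatching_feasibleCaps
    (hoccVar : ∀ i k, v (occ i k).1 (occ i k).2 = i)
    (hoccPol : ∀ i k, pol (occ i k).1 (occ i k).2 = decide ((k : ℕ) < 2))
    (hkIdx : ∀ j l, IsLitPos m₂ j l → occ (v j l) (kIdx j l) = (j, l)) :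
    FeasibleCaps I' Mₐ := by
  rintro E (⟨i, hE⟩ | ⟨j, hE⟩)
  · exact card_assignedIn_satMatching_le_of_variable hoccVar hoccPol hkIdx hE
  · exact card_assignedIn_satMatching_le_of_clause hkIdx hE

theorem satMatching_isMatching
    (hoccVar : ∀ i k, v (occ i k).1 (occ i k).2 = i)
    (hoccPol : ∀ i k, pol (occ i k).1 (occ i k).2 = decide ((k : ℕ) < 2))
    (hkIdx : ∀ j l, IsLitPos m₂ j l → occ (v j l) (kIdx j l) = (j, l)) :
    IsMatching I' Mₐ := by
  have hacc : ∀ p ∈ Mₐ, p.2 ∈ prefRes11 m₂ v kIdx p.1 ∧ p.1 ∈ prefHos11 m₂ occ p.2 :=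
    fun _ hp => satMatching_acceptable hkIdx hp
  refine ⟨hacc, fun r h h' hm hm' => ?_, fun h => ?_⟩
  · rw [mem_satMatching] at hm hm'
    exact Option.some_injective _ (hm.symm.trans hm')
  · rcases prefHos11_length_le_one_or_mem_region m₂ occ h with hlen | ⟨E, hE, hh, hcap⟩
    · exact (card_assignedTo_le_length (I := I') (fun p hp => (hacc p hp).2) h).trans hlen
    · exact (card_assignedTo_le_card_assignedIn hh).trans
        ((satMatching_feasibleCaps hoccVar hoccPol hkIdx E hE).trans hcap.le)

theorem satMatching_not_isSBP_of_vacant (hF : FeasibleCaps I' Mₐ) {r r' : Res11 n m}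
    {h h' : Hos11 n m} {E : Finset (Hos11 n m)} (hvac : ∀ r'', (r'', h) ∉ Mₐ)
    (hE : E ∈ regions11 m₂) (hcap : cap11 E = 1) (hh : h ∈ E) (hh' : h' ∈ E) (hne : r' ≠ r)
    (hr' : satAssign m₂ v pol kIdx a r' = some h') :
    ¬ IsSBP I' Mₐ r h :=
  hF.not_isSBP_of_vacant hvac hE hh <| hcap.le.trans <| Finset.card_pos.mpr
    ⟨r', Finset.mem_erase.mpr ⟨hne, mem_assignedIn.mpr ⟨h', hh', mem_satMatching.mpr hr'⟩⟩⟩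

theorem satMatching_not_isSBP_e (hoccValid : ∀ i k, IsLitPos m₂ (occ i k).1 (occ i k).2)
    (hoccVar : ∀ i k, v (occ i k).1 (occ i k).2 = i)
    (hoccPol : ∀ i k, pol (occ i k).1 (occ i k).2 = decide ((k : ℕ) < 2))
    (hoccInj : ∀ i, Function.Injective (occ i))
    (hkIdx : ∀ j l, IsLitPos m₂ j l → occ (v j l) (kIdx j l) = (j, l))
    (hM : IsMatching I' Mₐ) (hF : FeasibleCaps I' Mₐ)
    (i : Fin n) (t : Fin 2) (h : Hos11 n m) :
    ¬ IsSBP I' Mₐ (.e i t) h := by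
  intro hsbp
  have hacc := hsbp.1.2.1.1
  cases hai : a i
  · fin_cases t <;> simp [ppnInstance223, prefRes11] at hacc <;> rcases hacc with rfl | rfl
    · refine satMatching_not_isSBP_of_vacant hF (hM.vacant_of_prefH_eq_singleton rfl
        (by simp [satAssign, hai])) (Or.inl ⟨i, Or.inl rfl⟩) (cap11_eq_one (by simp)) (by simp)
        (by simp) (by simp) (satAssign_c_occ hoccValid hoccVar hoccPol hoccInj hkIdx (i := i)
        (k := 0) (by simpa using hai)) hsbp
    · exact hsbp.1.1 (by simp [satAssign, hai])
    · refine satMatching_not_isSBP_of_vacant hF (hM.vacant_of_prefH_eq_singleton rfl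
        (by simp [satAssign, hai])) (Or.inl ⟨i, Or.inr (Or.inl rfl)⟩) (cap11_eq_one (by simp))
        (by simp) (by simp) (by simp) (satAssign_c_occ hoccValid hoccVar hoccPol hoccInj hkIdx
        (i := i) (k := 1) (by simpa using hai)) hsbp
    · exact hsbp.1.1 (by simp [satAssign, hai])
  · fin_cases t
    · exact hM.not_isBlockingPair_of_mem_head (h' := .b i 0) (by simp [satAssign, hai])
        (by simp [ppnInstance223, prefRes11]) hsbp.1
    · exact hM.not_isBlockingPair_of_mem_head (h' := .b i 1) (by simp [satAssign, hai])
        (by simp [ppnInstance223, prefRes11]) hsbp.1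

theorem satMatching_not_isSBP_c_x (hoccVar : ∀ i k, v (occ i k).1 (occ i k).2 = i)
    (hoccPol : ∀ i k, pol (occ i k).1 (occ i k).2 = decide ((k : ℕ) < 2))
    (hM : IsMatching I' Mₐ) (hF : FeasibleCaps I' Mₐ)
    {i : Fin n} {k : Fin 3} (htrue : (if (k : ℕ) < 2 then a i else !a i) = true) :
    ¬ IsSBP I' Mₐ (.c (occ i k).1 (occ i k).2) (.x i k) := by
  have hvac := hM.vacant_of_prefH_eq_singleton (h := .x i k) rfl fun hm => by
    have := literalValue_eq_false_of_satAssign_eq_x (mem_satMatching.mp hm)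
    rw [literalValue_occ hoccVar hoccPol, htrue] at this
    exact Bool.noConfusion this
  fin_cases k
  · exact satMatching_not_isSBP_of_vacant hF hvac (Or.inl ⟨i, Or.inl rfl⟩)
      (cap11_eq_one (by simp)) (by simp) (r' := .e i 0) (h' := .b i 0) (by simp) (by simp)
      (by simpa [satAssign] using htrue)
  · exact satMatching_not_isSBP_of_vacant hF hvac (Or.inl ⟨i, Or.inr (Or.inl rfl)⟩)
      (cap11_eq_one (by simp)) (by simp) (r' := .e i 1) (h' := .b i 1) (by simp) (by simp)
      (by simpa [satAssign] using htrue)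
  · simp at htrue
    refine hF.not_isSBP_of_vacant hvac (Or.inl ⟨i, Or.inr (Or.inr rfl)⟩) (by simp) ?_
    show cap11 _ ≤ _
    rw [cap11_eq_two]
    refine le_of_eq_of_le (Finset.card_pair (a := Res11.e i 0) (b := Res11.e i 1) (by simp)).symm
      (Finset.card_le_card fun r hr => ?_)
    simp only [Finset.mem_insert, Finset.mem_singleton] at hr
    rcases hr with rfl | rfl
    · exact Finset.mem_erase.mpr
        ⟨by simp, mem_assignedIn.mpr ⟨.b i 2, by simp, by simp [satAssign, htrue]⟩⟩
    · exact Finset.mem_erase.mpr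
        ⟨by simp, mem_assignedIn.mpr ⟨.b i 3, by simp, by simp [satAssign, htrue]⟩⟩

/-- The first true literal of the clause holds the clause hospital, which ranks it higher. -/
theorem satMatching_not_isBlockingPair_c_clauseHos (hM : IsMatching I' Mₐ) {j : Fin m}
    {l : Fin 3} (hl : IsLitPos m₂ j l) (hlit : literalValue v pol a j l = true)
    (hsel : firstTrueLit v pol a j ≠ l) : ¬ IsBlockingPair I' Mₐ (.c j l) (clauseHos j l) := by
  have hlt := lt_of_le_of_ne (firstTrueLit_le hlit) hsel
  have hfirst := satAssign_c_firstTrueLit (kIdx := kIdx) hl hlit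
  fin_cases l
  · exact absurd hlt (Fin.not_lt_zero _)
  · have hsel0 : firstTrueLit v pol a j = 0 := by
      have : (firstTrueLit v pol a j : ℕ) < 1 := hlt
      exact Fin.ext (by simpa using this)
    rw [hsel0] at hfirst
    exact hM.not_isBlockingPair_of_head_mem le_rfl (mem_satMatching.mpr hfirst)
      (by simp [ppnInstance223, prefHos11, clauseHos])
  · have hj : ¬ (j : ℕ) < m₂ := fun hj => by simp [IsLitPos, hj] at hl
    have hlt2 : (firstTrueLit v pol a j : ℕ) < 2 := hlt
    exact hM.not_isBlockingPair_of_head_mem le_rfl (r₀ := .d j)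
      (by simp [satAssign, hj, hlt2, clauseHos])
      (by simp [ppnInstance223, prefHos11, clauseHos, hj])

theorem satMatching_not_isSBP_c (hoccVar : ∀ i k, v (occ i k).1 (occ i k).2 = i)
    (hoccPol : ∀ i k, pol (occ i k).1 (occ i k).2 = decide ((k : ℕ) < 2))
    (hkIdx : ∀ j l, IsLitPos m₂ j l → occ (v j l) (kIdx j l) = (j, l))
    (hM : IsMatching I' Mₐ) (hF : FeasibleCaps I' Mₐ)
    (j : Fin m) (l : Fin 3) (h : Hos11 n m) :
    ¬ IsSBP I' Mₐ (.c j l) h := by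
  intro hsbp
  have hacc : h ∈ prefRes11 m₂ v kIdx (.c j l) := hsbp.1.2.1.1
  rw [prefRes11_c] at hacc
  split_ifs at hacc with hl
  swap
  · simp at hacc
  have hocc := hkIdx j l hl
  cases hlit : literalValue v pol a j l
  · exact hM.not_isBlockingPair_of_mem_head (h' := .x (v j l) (kIdx j l))
      (by simp [satAssign, hl, hlit]) (by simp [ppnInstance223, prefRes11_c, hl]) hsbp.1
  simp only [List.mem_cons, List.not_mem_nil, or_false] at hacc
  rcases hacc with rfl | rfl
  · have htrue := literalValue_occ hoccVar hoccPol a (v j l) (kIdx j l)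
    rw [hocc, hlit] at htrue
    have := satMatching_not_isSBP_c_x hoccVar hoccPol hM hF htrue.symm
    rw [hocc] at this
    exact this hsbp
  by_cases hsel : firstTrueLit v pol a j = l
  · exact hsbp.1.1 (by simp [satAssign, hl, hlit, hsel])
  · exact satMatching_not_isBlockingPair_c_clauseHos hM hl hlit hsel hsbp.1

theorem satMatching_not_isSBP_d
    (hM : IsMatching I' Mₐ) (hF : FeasibleCaps I' Mₐ)
    {j : Fin m} (hsat : ∃ l, IsLitPos m₂ j l ∧ literalValue v pol a j l = true) (h : Hos11 n m) :
    ¬ IsSBP I' Mₐ (.d j) h := by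
  intro hsbp
  have hacc : h ∈ prefRes11 m₂ v kIdx (.d j) := hsbp.1.2.1.1
  by_cases hj : (j : ℕ) < m₂
  · simp [prefRes11, hj] at hacc
  by_cases hsel : (firstTrueLit v pol a j : ℕ) < 2
  · simp only [prefRes11, hj, if_false, List.mem_cons, List.not_mem_nil, or_false] at hacc
    rcases hacc with rfl | rfl
    · obtain ⟨l, hl, hlit⟩ := hsat
      have hfirst := satAssign_c_firstTrueLit (kIdx := kIdx) hl hlit
      rw [clauseHos, if_pos hsel] at hfirst
      exact satMatching_not_isSBP_of_vacant hF (hM.vacant_of_prefH_eq_singleton (r := .d j)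
        (by simp [ppnInstance223, prefHos11, hj]) (by simp [satAssign, hj, hsel]))
        (Or.inr ⟨j, Or.inr (Or.inl ⟨hj, Or.inl rfl⟩)⟩) (cap11_eq_one (by simp)) (by simp)
        (by simp) (by simp) hfirst hsbp
    · exact hsbp.1.1 (by simp [satAssign, hj, hsel])
  · exact hM.not_isBlockingPair_of_mem_head (h' := .a j 1) (by simp [satAssign, hj, hsel])
      (by simp [ppnInstance223, prefRes11, hj]) hsbp.1

theorem satMatching_not_isSBP_g
    (hM : IsMatching I' Mₐ) (hF : FeasibleCaps I' Mₐ)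
    {j : Fin m} {r : Res11 n m} (hr : r = .g1 j ∨ r = .g3 j) (h : Hos11 n m) :
    ¬ IsSBP I' Mₐ r h := by
  intro hsbp
  have hh : h = .g2 j ∨ h = .g4 j := by
    have hacc : h ∈ prefRes11 m₂ v kIdx r := hsbp.1.2.1.1
    rcases hr with rfl | rfl <;> simp [prefRes11] at hacc <;> tauto
  have hvac : ∀ r', (r', h) ∉ Mₐ := by
    intro r' hm
    have hacc := (hM.1 _ hm).2
    rcases hh with rfl | rfl <;> simp [ppnInstance223, prefHos11] at hacc <;>
      rcases hacc with rfl | rfl <;> simp [satAssign] at hm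
  exact satMatching_not_isSBP_of_vacant hF hvac (Or.inr ⟨j, Or.inr (Or.inr rfl)⟩)
    (cap11_eq_one (by simp)) (by rcases hh with rfl | rfl <;> simp) (r' := .z j) (h' := .t j)
    (by simp) (by rcases hr with rfl | rfl <;> simp) (by simp [satAssign]) hsbp

theorem satMatching_not_isSBP_z
    (hM : IsMatching I' Mₐ) (hF : FeasibleCaps I' Mₐ)
    {j : Fin m} (hsat : ∃ l, IsLitPos m₂ j l ∧ literalValue v pol a j l = true) (h : Hos11 n m) :
    ¬ IsSBP I' Mₐ (.z j) h := by
  intro hsbp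
  have hacc : h ∈ prefRes11 m₂ v kIdx (.z j) := hsbp.1.2.1.1
  simp only [prefRes11, List.mem_cons, List.not_mem_nil, or_false] at hacc
  rcases hacc with rfl | rfl
  swap
  · exact hsbp.1.1 (by simp [satAssign])
  obtain ⟨l, hl, hlit⟩ := hsat
  have hl' := (firstTrueLit_spec hl hlit).1
  have hfirst := satAssign_c_firstTrueLit (kIdx := kIdx) hl hlit
  have hvac := hM.vacant_of_prefH_eq_singleton (h := .y j) rfl (by simp [satAssign])
  by_cases hj : (j : ℕ) < m₂
  · have hsel : (firstTrueLit v pol a j : ℕ) < 2 := by simpa [IsLitPos, hj] using hl'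
    rw [clauseHos, if_pos hsel] at hfirst
    exact satMatching_not_isSBP_of_vacant hF hvac (Or.inr ⟨j, Or.inl ⟨hj, rfl⟩⟩)
      (cap11_eq_one (by simp)) (by simp) (by simp) (by simp) hfirst hsbp
  by_cases hsel : (firstTrueLit v pol a j : ℕ) < 2
  · exact satMatching_not_isSBP_of_vacant hF hvac
      (Or.inr ⟨j, Or.inr (Or.inl ⟨hj, Or.inr rfl⟩)⟩) (cap11_eq_one (by simp)) (by simp)
      (r' := .d j) (h' := .a j 2) (by simp) (by simp) (by simp [satAssign, hj, hsel]) hsbp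
  · rw [clauseHos, if_neg hsel] at hfirst
    exact satMatching_not_isSBP_of_vacant hF hvac
      (Or.inr ⟨j, Or.inr (Or.inl ⟨hj, Or.inr rfl⟩)⟩) (cap11_eq_one (by simp)) (by simp) (by simp)
      (by simp) hfirst hsbp

theorem satMatching_isStronglyStable (hoccValid : ∀ i k, IsLitPos m₂ (occ i k).1 (occ i k).2)
    (hoccVar : ∀ i k, v (occ i k).1 (occ i k).2 = i)
    (hoccPol : ∀ i k, pol (occ i k).1 (occ i k).2 = decide ((k : ℕ) < 2))
    (hoccInj : ∀ i, Function.Injective (occ i))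
    (hkIdx : ∀ j l, IsLitPos m₂ j l → occ (v j l) (kIdx j l) = (j, l))
    (hsat : ∀ j, ∃ l, IsLitPos m₂ j l ∧ literalValue v pol a j l = true) :
    IsStronglyStable I' Mₐ := by
  have hM := satMatching_isMatching (a := a) hoccVar hoccPol hkIdx
  have hF := satMatching_feasibleCaps (a := a) hoccVar hoccPol hkIdx
  refine ⟨hM, hF, fun r h => ?_⟩
  cases r with
  | e i t => exact satMatching_not_isSBP_e hoccValid hoccVar hoccPol hoccInj hkIdx hM hF i t h
  | c j l => exact satMatching_not_isSBP_c hoccVar hoccPol hkIdx hM hF j l h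
  | d j => exact satMatching_not_isSBP_d hM hF (hsat j) h
  | g1 j => exact satMatching_not_isSBP_g hM hF (.inl rfl) h
  | g3 j => exact satMatching_not_isSBP_g hM hF (.inr rfl) h
  | z j => exact satMatching_not_isSBP_z hM hF (hsat j) h

end Backward

theorem ppn223_reduction_correct_general {n m m₂ : ℕ}
    (v : Fin m → Fin 3 → Fin n) (pol : Fin m → Fin 3 → Bool)
    (occ : Fin n → Fin 3 → Fin m × Fin 3) (kIdx : Fin m → Fin 3 → Fin 3)
    (hoccValid : ∀ i k, ((occ i k).2 : ℕ) < (if ((occ i k).1 : ℕ) < m₂ then 2 else 3))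
    (hoccVar : ∀ i k, v (occ i k).1 (occ i k).2 = i)
    (hoccPol : ∀ i k, pol (occ i k).1 (occ i k).2 = decide ((k : ℕ) < 2))
    (hoccInj : ∀ i, Function.Injective (occ i))
    (hkIdx : ∀ (j : Fin m) (l : Fin 3), (l : ℕ) < (if (j : ℕ) < m₂ then 2 else 3) →
      occ (v j l) (kIdx j l) = (j, l)) :
    (∃ M : Finset (Res11 n m × Hos11 n m),
        (ppnInstance223 m₂ v occ kIdx).IsStronglyStable M) ↔
    (∃ a : Fin n → Bool, ∀ j : Fin m, ∃ l : Fin 3,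
        (l : ℕ) < (if (j : ℕ) < m₂ then 2 else 3) ∧
        (if pol j l then a (v j l) else !(a (v j l))) = true) := by
  constructor
  · rintro ⟨M, hM⟩
    exact ⟨assignmentOf M, hM.assignmentOf_satisfies hoccPol hkIdx⟩
  · rintro ⟨a, ha⟩
    exact ⟨satMatching m₂ v pol kIdx a,
      satMatching_isStronglyStable hoccValid hoccVar hoccPol hoccInj hkIdx ha⟩

/-- `I'` admits a strongly stable matching iff the PPN-3-SAT instance `I` is
satisfiable. -/
theorem ppn223_reduction_correct {n m m₂ : ℕ} (hm₂ : m₂ ≤ m)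
    (v : Fin m → Fin 3 → Fin n) (pol : Fin m → Fin 3 → Bool)
    (occ : Fin n → Fin 3 → Fin m × Fin 3) (kIdx : Fin m → Fin 3 → Fin 3)
    (hoccValid : ∀ i k, ((occ i k).2 : ℕ) < (if ((occ i k).1 : ℕ) < m₂ then 2 else 3))
    (hoccVar : ∀ i k, v (occ i k).1 (occ i k).2 = i)
    (hoccPol : ∀ i k, pol (occ i k).1 (occ i k).2 = decide ((k : ℕ) < 2))
    (hoccInj : ∀ i, Function.Injective (occ i))
    (hkIdx : ∀ (j : Fin m) (l : Fin 3), (l : ℕ) < (if (j : ℕ) < m₂ then 2 else 3) →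
      occ (v j l) (kIdx j l) = (j, l)) :
    (∃ M : Finset (Res11 n m × Hos11 n m),
        (ppnInstance223 m₂ v occ kIdx).IsStronglyStable M) ↔
    (∃ a : Fin n → Bool, ∀ j : Fin m, ∃ l : Fin 3,
        (l : ℕ) < (if (j : ℕ) < m₂ then 2 else 3) ∧
        (if pol j l then a (v j l) else !(a (v j l))) = true) :=
  ppn223_reduction_correct_general v pol occ kIdx hoccValid hoccVar hoccPol hoccInj hkIdx
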